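/- For every α ∈ (0,1) and every γ ∈ W, ∫_G h_α(y) dγ(y,u) ≤ ∫_G k(y,u) dγ(y,u). (Here h_α is lower semicontinuous on Y, hence Borel measurable and bounded, so the left-hand integral is well defined.) -/

import Mathlib

open MeasureTheory Filter Topology Set

noncomputable section

variable {m : ℕ} {U₀ : Type*} [MetricSpace U₀] [CompactSpace U₀]
  [MeasurableSpace U₀] [BorelSpace U₀]

/-- The set `G = {(y,u) : y ∈ Y, u ∈ U y, f (y,u) ∈ Y}`. -/
def Gset (Y : Set (Fin m → ℝ)) (U : (Fin m → ℝ) → Set U₀)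
    (f : (Fin m → ℝ) × U₀ → (Fin m → ℝ)) : Set ((Fin m → ℝ) × U₀) :=
  {p | p.1 ∈ Y ∧ p.2 ∈ U p.1 ∧ f p ∈ Y}

/-- Admissible process from the initial condition `y₀`. -/
def Admissible (Y : Set (Fin m → ℝ)) (U : (Fin m → ℝ) → Set U₀)
    (f : (Fin m → ℝ) × U₀ → (Fin m → ℝ)) (y₀ : Fin m → ℝ)
    (y : ℕ → (Fin m → ℝ)) (u : ℕ → U₀) : Prop :=
  y 0 = y₀ ∧ ∀ t : ℕ, u t ∈ U (y t) ∧ y t ∈ Y ∧ y (t + 1) = f (y t, u t)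

/-- Admissible process without a prescribed initial condition. -/
def AdmissibleProc (Y : Set (Fin m → ℝ)) (U : (Fin m → ℝ) → Set U₀)
    (f : (Fin m → ℝ) × U₀ → (Fin m → ℝ))
    (y : ℕ → (Fin m → ℝ)) (u : ℕ → U₀) : Prop :=
  ∀ t : ℕ, u t ∈ U (y t) ∧ y t ∈ Y ∧ y (t + 1) = f (y t, u t)

/-- The finite-horizon value function `V_T(y₀)`. -/
def VT (Y : Set (Fin m → ℝ)) (U : (Fin m → ℝ) → Set U₀)
    (f : (Fin m → ℝ) × U₀ → (Fin m → ℝ)) (k : (Fin m → ℝ) × U₀ → ℝ)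
    (T : ℕ) (y₀ : Fin m → ℝ) : ℝ :=
  sInf {c | ∃ y u, Admissible Y U f y₀ y u ∧
    c = (∑ t ∈ Finset.range T, k (y t, u t)) / (T : ℝ)}

/-- The discounted value function `h_α(y₀)`. -/
def hdisc (Y : Set (Fin m → ℝ)) (U : (Fin m → ℝ) → Set U₀)
    (f : (Fin m → ℝ) × U₀ → (Fin m → ℝ)) (k : (Fin m → ℝ) × U₀ → ℝ)
    (α : ℝ) (y₀ : Fin m → ℝ) : ℝ :=
  (1 - α) * sInf {c | ∃ y u, Admissible Y U f y₀ y u ∧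
    c = ∑' t : ℕ, α ^ t * k (y t, u t)}

/-- The set `W` of probability measures on `G` with zero drift. -/
def Wset (Y : Set (Fin m → ℝ)) (U : (Fin m → ℝ) → Set U₀)
    (f : (Fin m → ℝ) × U₀ → (Fin m → ℝ)) :
    Set (Measure ((Fin m → ℝ) × U₀)) :=
  {γ | IsProbabilityMeasure γ ∧ γ (Gset Y U f)ᶜ = 0 ∧
    ∀ φ : (Fin m → ℝ) → ℝ, ContinuousOn φ Y →
      ∫ p, (φ (f p) - φ p.1) ∂γ = 0}

/-- The set `W₁(y₀)`. -/
def W1set (Y : Set (Fin m → ℝ)) (U : (Fin m → ℝ) → Set U₀)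
    (f : (Fin m → ℝ) × U₀ → (Fin m → ℝ)) (y₀ : Fin m → ℝ) :
    Set (Measure ((Fin m → ℝ) × U₀)) :=
  {γ | γ ∈ Wset Y U f ∧ ∃ ξ : Measure ((Fin m → ℝ) × U₀),
    IsFiniteMeasure ξ ∧ ξ (Gset Y U f)ᶜ = 0 ∧
    ∀ φ : (Fin m → ℝ) → ℝ, ContinuousOn φ Y →
      ∫ p, (φ p.1 - φ y₀) ∂γ = ∫ p, (φ (f p) - φ p.1) ∂ξ}

/-- The set `W₂(y₀)`. -/
def W2set (Y : Set (Fin m → ℝ)) (U : (Fin m → ℝ) → Set U₀)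
    (f : (Fin m → ℝ) × U₀ → (Fin m → ℝ)) (y₀ : Fin m → ℝ) :
    Set (Measure ((Fin m → ℝ) × U₀)) :=
  {γ | γ ∈ Wset Y U f ∧ ∃ ξ : ℕ → Measure ((Fin m → ℝ) × U₀),
    (∀ i, IsFiniteMeasure (ξ i) ∧ (ξ i) (Gset Y U f)ᶜ = 0) ∧
    ∀ φ : (Fin m → ℝ) → ℝ, ContinuousOn φ Y →
      Tendsto (fun i => ∫ p, (φ (f p) - φ p.1) ∂(ξ i)) atTop
        (𝓝 (∫ p, (φ p.1 - φ y₀) ∂γ))}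

/-- The optimal value `d*(y₀)` of the dual IDLP problem. -/
def dstar (Y : Set (Fin m → ℝ)) (U : (Fin m → ℝ) → Set U₀)
    (f : (Fin m → ℝ) × U₀ → (Fin m → ℝ)) (k : (Fin m → ℝ) × U₀ → ℝ)
    (y₀ : Fin m → ℝ) : ℝ :=
  sSup {μ : ℝ | ∃ ψ η : (Fin m → ℝ) → ℝ, ContinuousOn ψ Y ∧ ContinuousOn η Y ∧
    ∀ p ∈ Gset Y U f,
      0 ≤ k p + (ψ y₀ - ψ p.1) + η (f p) - η p.1 - μ ∧
      0 ≤ ψ (f p) - ψ p.1}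

/-- The optimal value `k*(y₀)` of the primal IDLP problem. -/
def kstar (Y : Set (Fin m → ℝ)) (U : (Fin m → ℝ) → Set U₀)
    (f : (Fin m → ℝ) × U₀ → (Fin m → ℝ)) (k : (Fin m → ℝ) × U₀ → ℝ)
    (y₀ : Fin m → ℝ) : ℝ :=
  sInf {c | ∃ γ ξ : Measure ((Fin m → ℝ) × U₀),
    γ ∈ Wset Y U f ∧ IsFiniteMeasure ξ ∧ ξ (Gset Y U f)ᶜ = 0 ∧
    (∀ φ : (Fin m → ℝ) → ℝ, ContinuousOn φ Y →
      ∫ p, (φ y₀ - φ p.1) ∂γ + ∫ p, (φ (f p) - φ p.1) ∂ξ = 0) ∧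
    c = ∫ p, k p ∂γ}

/-- Occupational measure of a process over `{0, …, T-1}`. -/
def occMeas (y : ℕ → (Fin m → ℝ)) (u : ℕ → U₀) (T : ℕ) :
    Measure ((Fin m → ℝ) × U₀) :=
  (T : ENNReal)⁻¹ • ∑ t ∈ Finset.range T, Measure.dirac (y t, u t)

/-- Discounted occupational measure of a process. -/
def discMeas (α : ℝ) (y : ℕ → (Fin m → ℝ)) (u : ℕ → U₀) :
    Measure ((Fin m → ℝ) × U₀) :=
  Measure.sum fun t : ℕ =>
    ENNReal.ofReal ((1 - α) * α ^ t) • Measure.dirac (y t, u t)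

/-- The set `Γ_T(y₀)` of occupational measures. -/
def GammaT (Y : Set (Fin m → ℝ)) (U : (Fin m → ℝ) → Set U₀)
    (f : (Fin m → ℝ) × U₀ → (Fin m → ℝ)) (y₀ : Fin m → ℝ) (T : ℕ) :
    Set (Measure ((Fin m → ℝ) × U₀)) :=
  {γ | ∃ y u, Admissible Y U f y₀ y u ∧ γ = occMeas y u T}

/-- The set `Θ_α(y₀)` of discounted occupational measures. -/
def Theta (Y : Set (Fin m → ℝ)) (U : (Fin m → ℝ) → Set U₀)
    (f : (Fin m → ℝ) × U₀ → (Fin m → ℝ)) (α : ℝ) (y₀ : Fin m → ℝ) :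
    Set (Measure ((Fin m → ℝ) × U₀)) :=
  {γ | ∃ y u, Admissible Y U f y₀ y u ∧ γ = discMeas α y u}

/-- Weak* convergence of a sequence of measures (tested against functions
continuous on `G`). -/
def WeakStarTendstoOn (G : Set ((Fin m → ℝ) × U₀))
    (γs : ℕ → Measure ((Fin m → ℝ) × U₀))
    (γ : Measure ((Fin m → ℝ) × U₀)) : Prop :=
  ∀ q : (Fin m → ℝ) × U₀ → ℝ, ContinuousOn q G →
    Tendsto (fun i => ∫ p, q p ∂(γs i)) atTop (𝓝 (∫ p, q p ∂γ))

/-- A `T`-periodic process. -/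
def PeriodicProc (y : ℕ → (Fin m → ℝ)) (u : ℕ → U₀) (T : ℕ) : Prop :=
  ∀ t : ℕ, y (t + T) = y t ∧ u (t + T) = u t

/-- The point `z` is finite-time reachable from `y₀`. -/
def FTReachable (Y : Set (Fin m → ℝ)) (U : (Fin m → ℝ) → Set U₀)
    (f : (Fin m → ℝ) × U₀ → (Fin m → ℝ)) (y₀ z : Fin m → ℝ) : Prop :=
  ∃ (tb : ℕ) (ty : ℕ → (Fin m → ℝ)) (tu : ℕ → U₀),
    Admissible Y U f y₀ ty tu ∧ ty tb = z

/-- The set `Γ_per(y₀)` of occupational measures of periodic processes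
finite-time reachable from `y₀`. -/
def GammaPer (Y : Set (Fin m → ℝ)) (U : (Fin m → ℝ) → Set U₀)
    (f : (Fin m → ℝ) × U₀ → (Fin m → ℝ)) (y₀ : Fin m → ℝ) :
    Set (Measure ((Fin m → ℝ) × U₀)) :=
  {γ | ∃ (T : ℕ) (y : ℕ → (Fin m → ℝ)) (u : ℕ → U₀), 1 ≤ T ∧
    AdmissibleProc Y U f y u ∧ PeriodicProc y u T ∧
    FTReachable Y U f y₀ (y 0) ∧ γ = occMeas y u T}

/-- The optimal value `V_per(y₀)` over periodic regimes. -/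
def Vper (Y : Set (Fin m → ℝ)) (U : (Fin m → ℝ) → Set U₀)
    (f : (Fin m → ℝ) × U₀ → (Fin m → ℝ)) (k : (Fin m → ℝ) × U₀ → ℝ)
    (y₀ : Fin m → ℝ) : ℝ :=
  sInf {c | ∃ (T : ℕ) (y : ℕ → (Fin m → ℝ)) (u : ℕ → U₀), 1 ≤ T ∧
    AdmissibleProc Y U f y u ∧ PeriodicProc y u T ∧
    FTReachable Y U f y₀ (y 0) ∧
    c = (∑ t ∈ Finset.range T, k (y t, u t)) / (T : ℝ)}

/-- The set `K` of continuous functions used in the alternative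
representation of the limit optimal values. -/
def Kcal (Y : Set (Fin m → ℝ)) (U : (Fin m → ℝ) → Set U₀)
    (f : (Fin m → ℝ) × U₀ → (Fin m → ℝ)) (k : (Fin m → ℝ) × U₀ → ℝ) :
    Set ((Fin m → ℝ) → ℝ) :=
  {w | ContinuousOn w Y ∧ (∀ p ∈ Gset Y U f, w p.1 ≤ w (f p)) ∧
    ∀ γ ∈ Wset Y U f, ∫ p, w p.1 ∂γ ≤ ∫ p, k p ∂γ}

/-- The optimal value `d*(θ, y₀)` of the perturbed dual problem. -/
def dstarTheta (Y : Set (Fin m → ℝ)) (U : (Fin m → ℝ) → Set U₀)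
    (f : (Fin m → ℝ) × U₀ → (Fin m → ℝ)) (k : (Fin m → ℝ) × U₀ → ℝ)
    (θ : ℝ) (y₀ : Fin m → ℝ) : ℝ :=
  sSup {μ : ℝ | ∃ ψ η : (Fin m → ℝ) → ℝ, ContinuousOn ψ Y ∧ ContinuousOn η Y ∧
    ∀ p ∈ Gset Y U f,
      0 ≤ k p + (ψ y₀ - ψ p.1) + η (f p) - η p.1 - μ ∧
      -θ ≤ ψ (f p) - ψ p.1}

/-- The optimal value `d̄*(θ, y₀)` of the perturbed dual problem in the
`ψ(y₀)` form. -/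
def dbarTheta (Y : Set (Fin m → ℝ)) (U : (Fin m → ℝ) → Set U₀)
    (f : (Fin m → ℝ) × U₀ → (Fin m → ℝ)) (k : (Fin m → ℝ) × U₀ → ℝ)
    (θ : ℝ) (y₀ : Fin m → ℝ) : ℝ :=
  sSup {c : ℝ | ∃ ψ η : (Fin m → ℝ) → ℝ, ContinuousOn ψ Y ∧ ContinuousOn η Y ∧
    (∀ p ∈ Gset Y U f,
      0 ≤ k p - ψ p.1 + η (f p) - η p.1 ∧
      -θ ≤ ψ (f p) - ψ p.1) ∧ c = ψ y₀}

/-- The optimal value `k*(θ, y₀)` of the perturbed primal problem. -/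
def kstarTheta (Y : Set (Fin m → ℝ)) (U : (Fin m → ℝ) → Set U₀)
    (f : (Fin m → ℝ) × U₀ → (Fin m → ℝ)) (k : (Fin m → ℝ) × U₀ → ℝ)
    (θ : ℝ) (y₀ : Fin m → ℝ) : ℝ :=
  sInf {c | ∃ γ ξ : Measure ((Fin m → ℝ) × U₀),
    γ ∈ Wset Y U f ∧ IsFiniteMeasure ξ ∧ ξ (Gset Y U f)ᶜ = 0 ∧
    (∀ φ : (Fin m → ℝ) → ℝ, ContinuousOn φ Y →
      ∫ p, (φ y₀ - φ p.1) ∂γ + ∫ p, (φ (f p) - φ p.1) ∂ξ = 0) ∧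
    c = ∫ p, k p ∂γ + θ * (ξ Set.univ).toReal}

end

/-!
The value function satisfies the Bellman inequality `h_α (y) ≤ (1 - α) k (y, u) + α h_α (f (y, u))`
on `G`, since prefixing `(y, u)` to a process admissible from `f (y, u)` gives one admissible from
`y`. Integrating it against `γ ∈ W`, whose marginals under `(y, u) ↦ y` and `(y, u) ↦ f (y, u)`
coincide, gives `∫ h_α ≤ (1 - α) ∫ k + α ∫ h_α`, which is the claim.

The work lies in making `∫ h_α dγ` meaningful: `h_α` is lower semicontinuous on `Y`, since
admissible processes form a compact set of sequences in `G` (Tychonoff) on which the discounted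
cost is continuous (Tannery), so near-optimal processes from `yₙ → y` have a limit point that is
admissible from `y`.
-/

section Geometric

variable {α M : ℝ}

theorem norm_geometric_mul_le (hα0 : 0 ≤ α) {b : ℕ → ℝ} (hb : ∀ t, ‖b t‖ ≤ M) (t : ℕ) :
    ‖α ^ t * b t‖ ≤ M * α ^ t := by
  rw [norm_mul, norm_pow, Real.norm_of_nonneg hα0, mul_comm]
  exact mul_le_mul_of_nonneg_right (hb t) (pow_nonneg hα0 t)

theorem summable_geometric_mul_of_norm_le (hα0 : 0 ≤ α) (hα1 : α < 1) {b : ℕ → ℝ}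
    (hb : ∀ t, ‖b t‖ ≤ M) : Summable fun t => α ^ t * b t :=
  ((summable_geometric_of_lt_one hα0 hα1).mul_left M).of_norm_bounded
    (norm_geometric_mul_le hα0 hb)

theorem norm_tsum_geometric_mul_le (hα0 : 0 ≤ α) (hα1 : α < 1) {b : ℕ → ℝ}
    (hb : ∀ t, ‖b t‖ ≤ M) : ‖∑' t, α ^ t * b t‖ ≤ M / (1 - α) :=
  tsum_of_norm_bounded ((hasSum_geometric_of_lt_one hα0 hα1).mul_left M)
    (norm_geometric_mul_le hα0 hb)

theorem tendsto_tsum_geometric_mul (hα0 : 0 ≤ α) (hα1 : α < 1) {b : ℕ → ℕ → ℝ} {b₀ : ℕ → ℝ}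
    (hb : ∀ t, Tendsto (fun n => b n t) atTop (𝓝 (b₀ t))) (hM : ∀ n t, ‖b n t‖ ≤ M) :
    Tendsto (fun n => ∑' t, α ^ t * b n t) atTop (𝓝 (∑' t, α ^ t * b₀ t)) :=
  tendsto_tsum_of_dominated_convergence ((summable_geometric_of_lt_one hα0 hα1).mul_left M)
    (fun t => (hb t).const_mul _) (.of_forall fun n => norm_geometric_mul_le hα0 (hM n))

end Geometric

theorem measurable_of_isClosed_sublevel {X : Type*} [TopologicalSpace X] [MeasurableSpace X]
    [OpensMeasurableSpace X] {s : Set X} (hs : MeasurableSet s) {g : X → ℝ}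
    (hg : ∀ x ∉ s, g x = 0) (hcl : ∀ c, IsClosed {x | x ∈ s ∧ g x ≤ c}) : Measurable g := by
  refine measurable_of_Iic fun c => ?_
  have hpre : g ⁻¹' Iic c = {x | x ∈ s ∧ g x ≤ c} ∪ sᶜ ∩ {_x | (0 : ℝ) ≤ c} := by
    ext x
    by_cases hx : x ∈ s <;> simp [hx, hg]
  rw [hpre]
  exact (hcl c).measurableSet.union (hs.compl.inter (MeasurableSet.const _))

theorem integral_le_of_bellman_of_map_eq {Ω X : Type*} [MeasurableSpace Ω] [MeasurableSpace X]
    {γ : Measure Ω} {π f : Ω → X} (hπ : Measurable π) (hf : Measurable f)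
    (hmap : γ.map π = γ.map f) {g : X → ℝ} (hg : Measurable g)
    (hgπ : Integrable (fun p => g (π p)) γ) {k : Ω → ℝ} (hk : Integrable k γ) {α : ℝ}
    (hα : α < 1) (hle : ∀ᵐ p ∂γ, g (π p) ≤ (1 - α) * k p + α * g (f p)) :
    ∫ p, g (π p) ∂γ ≤ ∫ p, k p ∂γ := by
  have hgf : Integrable (fun p => g (f p)) γ := by
    have hg_map : Integrable g (γ.map π) :=
      (integrable_map_measure hg.aestronglyMeasurable hπ.aemeasurable).2 hgπ
    rw [hmap] at hg_map
    exact (integrable_map_measure hg.aestronglyMeasurable hf.aemeasurable).1 hg_map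
  have hswap : ∫ p, g (f p) ∂γ = ∫ p, g (π p) ∂γ := by
    rw [← integral_map hf.aemeasurable hg.aestronglyMeasurable, ← hmap,
      integral_map hπ.aemeasurable hg.aestronglyMeasurable]
  have hint : ∫ p, g (π p) ∂γ ≤ ∫ p, ((1 - α) * k p + α * g (f p)) ∂γ :=
    integral_mono_ae hgπ ((hk.const_mul _).add (hgf.const_mul _)) hle
  rw [integral_add (hk.const_mul _) (hgf.const_mul _), integral_const_mul, integral_const_mul,
    hswap] at hint
  have hscaled : (1 - α) * ∫ p, g (π p) ∂γ ≤ (1 - α) * ∫ p, k p ∂γ := by linarith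
  exact le_of_mul_le_mul_left hscaled (by linarith)

section DiscountedControl

variable {m : ℕ} {U₀ : Type*} {Y : Set (Fin m → ℝ)} {U : (Fin m → ℝ) → Set U₀}
  {f : (Fin m → ℝ) × U₀ → (Fin m → ℝ)} {k : (Fin m → ℝ) × U₀ → ℝ} {α M : ℝ}

variable (Y U f k α) in
def discountedCosts (z : Fin m → ℝ) : Set ℝ :=
  {c | ∃ y u, Admissible Y U f z y u ∧ c = ∑' t : ℕ, α ^ t * k (y t, u t)}

theorem hdisc_eq_mul_sInf (z : Fin m → ℝ) :
    hdisc Y U f k α z = (1 - α) * sInf (discountedCosts Y U f k α z) := rfl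

theorem Admissible.mem_Gset {z : Fin m → ℝ} {y : ℕ → Fin m → ℝ} {u : ℕ → U₀}
    (h : Admissible Y U f z y u) (t : ℕ) : (y t, u t) ∈ Gset Y U f :=
  ⟨(h.2 t).2.1, (h.2 t).1, (h.2 t).2.2 ▸ (h.2 (t + 1)).2.1⟩

theorem Admissible.cons {p : (Fin m → ℝ) × U₀} (hp : p ∈ Gset Y U f)
    {y : ℕ → Fin m → ℝ} {u : ℕ → U₀} (h : Admissible Y U f (f p) y u) :
    Admissible Y U f p.1 (fun n => Nat.casesOn n p.1 y) (fun n => Nat.casesOn n p.2 u) := by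
  refine ⟨rfl, fun t => ?_⟩
  cases t with
  | zero => exact ⟨hp.2.1, hp.1, by simp [h.1]⟩
  | succ t => exact h.2 t

theorem exists_admissible (hA : ∀ y ∈ Y, ∃ u ∈ U y, f (y, u) ∈ Y) {z : Fin m → ℝ}
    (hz : z ∈ Y) : ∃ y u, Admissible Y U f z y u := by
  choose g hgU hgY using hA
  let s : ℕ → Y := fun n => Nat.rec ⟨z, hz⟩ (fun _ x => ⟨f (x, g x x.2), hgY x x.2⟩) n
  refine ⟨fun n => (s n).1, fun n => g (s n).1 (s n).2, rfl, fun t => ?_⟩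
  exact ⟨hgU _ (s t).2, (s t).2, rfl⟩

theorem discountedCosts_eq_empty {z : Fin m → ℝ} (hz : z ∉ Y) :
    discountedCosts Y U f k α z = ∅ :=
  eq_empty_of_forall_notMem fun _ ⟨_, _, h, _⟩ => hz (h.1 ▸ (h.2 0).2.1)

theorem discountedCosts_nonempty (hA : ∀ y ∈ Y, ∃ u ∈ U y, f (y, u) ∈ Y) {z : Fin m → ℝ}
    (hz : z ∈ Y) : (discountedCosts Y U f k α z).Nonempty :=
  let ⟨y, u, h⟩ := exists_admissible hA hz
  ⟨_, y, u, h, rfl⟩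

section Bounded

variable (hkM : ∀ p ∈ Gset Y U f, ‖k p‖ ≤ M) (hα0 : 0 ≤ α) (hα1 : α < 1)
include hkM hα0 hα1

theorem Admissible.summable_cost {z : Fin m → ℝ} {y : ℕ → Fin m → ℝ} {u : ℕ → U₀}
    (h : Admissible Y U f z y u) : Summable fun t => α ^ t * k (y t, u t) :=
  summable_geometric_mul_of_norm_le hα0 hα1 fun t => hkM _ (h.mem_Gset t)

theorem abs_le_of_mem_discountedCosts {z : Fin m → ℝ} {c : ℝ}
    (hc : c ∈ discountedCosts Y U f k α z) : |c| ≤ M / (1 - α) := by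
  obtain ⟨y, u, h, rfl⟩ := hc
  exact norm_tsum_geometric_mul_le hα0 hα1 fun t => hkM _ (h.mem_Gset t)

theorem bddBelow_discountedCosts (z : Fin m → ℝ) : BddBelow (discountedCosts Y U f k α z) :=
  ⟨_, fun _ hc => neg_le_of_abs_le (abs_le_of_mem_discountedCosts hkM hα0 hα1 hc)⟩

theorem abs_hdisc_le (hA : ∀ y ∈ Y, ∃ u ∈ U y, f (y, u) ∈ Y) {z : Fin m → ℝ} (hz : z ∈ Y) :
    |hdisc Y U f k α z| ≤ M := by
  obtain ⟨c, hc⟩ := discountedCosts_nonempty (k := k) (α := α) hA hz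
  have hbound : ∀ c ∈ discountedCosts Y U f k α z, -(M / (1 - α)) ≤ c ∧ c ≤ M / (1 - α) :=
    fun c hc => abs_le.1 (abs_le_of_mem_discountedCosts hkM hα0 hα1 hc)
  have hsInf : |sInf (discountedCosts Y U f k α z)| ≤ M / (1 - α) :=
    abs_le.2 ⟨le_csInf ⟨c, hc⟩ fun c hc => (hbound c hc).1,
      csInf_le_of_le (bddBelow_discountedCosts hkM hα0 hα1 z) hc (hbound c hc).2⟩
  have h1α : 0 < 1 - α := by linarith
  rw [hdisc_eq_mul_sInf, abs_mul, abs_of_pos h1α]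
  calc (1 - α) * |sInf (discountedCosts Y U f k α z)| ≤ (1 - α) * (M / (1 - α)) :=
        mul_le_mul_of_nonneg_left hsInf h1α.le
    _ = M := by field_simp

end Bounded

theorem sInf_discountedCosts_le_bellman (hA : ∀ y ∈ Y, ∃ u ∈ U y, f (y, u) ∈ Y)
    (hkM : ∀ p ∈ Gset Y U f, ‖k p‖ ≤ M) (hα0 : 0 < α) (hα1 : α < 1)
    {p : (Fin m → ℝ) × U₀} (hp : p ∈ Gset Y U f) :
    sInf (discountedCosts Y U f k α p.1) ≤ k p + α * sInf (discountedCosts Y U f k α (f p)) := by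
  have hcons : ∀ c ∈ discountedCosts Y U f k α (f p),
      (sInf (discountedCosts Y U f k α p.1) - k p) / α ≤ c := by
    rintro _ ⟨y, u, h, rfl⟩
    have h' := h.cons hp
    have hcost : ∑' t, α ^ t * k ((fun n => Nat.casesOn n p.1 y : ℕ → Fin m → ℝ) t,
        (fun n => Nat.casesOn n p.2 u : ℕ → U₀) t) = k p + α * ∑' t, α ^ t * k (y t, u t) := by
      rw [(h'.summable_cost hkM hα0.le hα1).tsum_eq_zero_add, ← tsum_mul_left]
      simp only [pow_zero, one_mul, pow_succ, mul_comm _ α, mul_assoc]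
      rfl
    have hle := csInf_le (bddBelow_discountedCosts hkM hα0.le hα1 p.1) ⟨_, _, h', rfl⟩
    rw [div_le_iff₀' hα0]
    linarith
  have hle := le_csInf (discountedCosts_nonempty hA hp.2.2) hcons
  rw [div_le_iff₀' hα0] at hle
  linarith

theorem hdisc_le_bellman (hA : ∀ y ∈ Y, ∃ u ∈ U y, f (y, u) ∈ Y)
    (hkM : ∀ p ∈ Gset Y U f, ‖k p‖ ≤ M) (hα0 : 0 < α) (hα1 : α < 1)
    {p : (Fin m → ℝ) × U₀} (hp : p ∈ Gset Y U f) :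
    hdisc Y U f k α p.1 ≤ (1 - α) * k p + α * hdisc Y U f k α (f p) := by
  rw [hdisc_eq_mul_sInf, hdisc_eq_mul_sInf]
  nlinarith [sInf_discountedCosts_le_bellman hA hkM hα0 hα1 hp]

end DiscountedControl

section Semicontinuity

variable {m : ℕ} {U₀ : Type*} [TopologicalSpace U₀] {Y : Set (Fin m → ℝ)}
  {U : (Fin m → ℝ) → Set U₀} {f : (Fin m → ℝ) × U₀ → (Fin m → ℝ)} {k : (Fin m → ℝ) × U₀ → ℝ}
  {α : ℝ}

theorem isCompact_Gset [CompactSpace U₀] (hY : IsCompact Y)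
    (hUgraph : IsClosed {p : (Fin m → ℝ) × U₀ | p.1 ∈ Y ∧ p.2 ∈ U p.1}) (hf : Continuous f) :
    IsCompact (Gset Y U f) := by
  have hG : Gset Y U f = {p : (Fin m → ℝ) × U₀ | p.1 ∈ Y ∧ p.2 ∈ U p.1} ∩ f ⁻¹' Y := by
    ext p
    simp [Gset, and_assoc]
  refine (hY.prod isCompact_univ).of_isClosed_subset ?_ fun p hp => ⟨hp.1, trivial⟩
  rw [hG]
  exact hUgraph.inter (hY.isClosed.preimage hf)

theorem exists_admissible_subseq_tendsto [FirstCountableTopology U₀]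
    (hG : IsCompact (Gset Y U f)) (hf : Continuous f) {z : ℕ → Fin m → ℝ} {z₀ : Fin m → ℝ}
    (hz : Tendsto z atTop (𝓝 z₀)) {y : ℕ → ℕ → Fin m → ℝ} {u : ℕ → ℕ → U₀}
    (h : ∀ n, Admissible Y U f (z n) (y n) (u n)) :
    ∃ (y₀ : ℕ → Fin m → ℝ) (u₀ : ℕ → U₀) (φ : ℕ → ℕ), StrictMono φ ∧
      Admissible Y U f z₀ y₀ u₀ ∧
      ∀ t, Tendsto (fun n => (y (φ n) t, u (φ n) t)) atTop (𝓝 (y₀ t, u₀ t)) := by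
  obtain ⟨a, haG, φ, hφ, ha⟩ := (isCompact_univ_pi fun _ : ℕ => hG).tendsto_subseq
    (x := fun n t => (y n t, u n t)) fun n t _ => (h n).mem_Gset t
  have hat : ∀ t, Tendsto (fun n => (y (φ n) t, u (φ n) t)) atTop (𝓝 (a t)) :=
    tendsto_pi_nhds.1 ha
  refine ⟨fun t => (a t).1, fun t => (a t).2, φ, hφ, ⟨?_, fun t => ⟨(haG t trivial).2.1,
    (haG t trivial).1, ?_⟩⟩, hat⟩
  · have hz' : Tendsto (fun n => y (φ n) 0) atTop (𝓝 z₀) :=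
      (hz.comp hφ.tendsto_atTop).congr fun n => ((h (φ n)).1).symm
    exact tendsto_nhds_unique (hat 0).fst_nhds hz'
  · have hstep : Tendsto (fun n => y (φ n) (t + 1)) atTop (𝓝 (f (a t))) :=
      ((hf.tendsto _).comp (hat t)).congr fun n => (((h (φ n)).2 t).2.2).symm
    exact tendsto_nhds_unique (hat (t + 1)).fst_nhds hstep

theorem isClosed_sublevel_sInf_discountedCosts [FirstCountableTopology U₀]
    (hA : ∀ y ∈ Y, ∃ u ∈ U y, f (y, u) ∈ Y) (hG : IsCompact (Gset Y U f)) (hf : Continuous f)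
    (hk : Continuous k) (hα0 : 0 ≤ α) (hα1 : α < 1) (c : ℝ) :
    IsClosed {z | z ∈ Y ∧ sInf (discountedCosts Y U f k α z) ≤ c} := by
  obtain ⟨M, hkM⟩ := hG.exists_bound_of_continuousOn hk.continuousOn
  refine IsSeqClosed.isClosed fun z z₀ hz hzz₀ => ?_
  have happrox : ∀ n : ℕ, ∃ y u, Admissible Y U f (z n) y u ∧
      ∑' t, α ^ t * k (y t, u t) < c + 1 / ((n : ℝ) + 1) := by
    intro n
    obtain ⟨_, ⟨y, u, h, rfl⟩, hlt⟩ := exists_lt_of_csInf_lt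
      (discountedCosts_nonempty hA (hz n).1) ((hz n).2.trans_lt
        (lt_add_of_pos_right c Nat.one_div_pos_of_nat))
    exact ⟨y, u, h, hlt⟩
  choose y u hadm hlt using happrox
  obtain ⟨y₀, u₀, φ, hφ, hadm₀, hlim⟩ := exists_admissible_subseq_tendsto hG hf hzz₀ hadm
  have hcost := tendsto_tsum_geometric_mul hα0 hα1 (b := fun n t => k (y (φ n) t, u (φ n) t))
    (fun t => (hk.tendsto _).comp (hlim t)) fun n t => hkM _ ((hadm (φ n)).mem_Gset t)
  have hbound : Tendsto (fun n : ℕ => c + 1 / ((n : ℝ) + 1)) atTop (𝓝 c) := by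
    simpa using (tendsto_const_nhds (x := c)).add tendsto_one_div_add_atTop_nhds_zero_nat
  refine ⟨hadm₀.1 ▸ (hadm₀.2 0).2.1, ?_⟩
  calc sInf (discountedCosts Y U f k α z₀) ≤ ∑' t, α ^ t * k (y₀ t, u₀ t) :=
        csInf_le (bddBelow_discountedCosts hkM hα0 hα1 z₀) ⟨_, _, hadm₀, rfl⟩
    _ ≤ c := le_of_tendsto_of_tendsto' hcost hbound fun n =>
        (hlt (φ n)).le.trans (add_le_add_right (Nat.one_div_le_one_div (hφ.id_le n)) c)

theorem measurable_hdisc [FirstCountableTopology U₀] (hY : MeasurableSet Y)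
    (hA : ∀ y ∈ Y, ∃ u ∈ U y, f (y, u) ∈ Y) (hG : IsCompact (Gset Y U f)) (hf : Continuous f)
    (hk : Continuous k) (hα0 : 0 ≤ α) (hα1 : α < 1) : Measurable (hdisc Y U f k α) := by
  have hV : Measurable fun z => sInf (discountedCosts Y U f k α z) :=
    measurable_of_isClosed_sublevel hY
      (fun z hz => by rw [discountedCosts_eq_empty hz, Real.sInf_empty])
      (isClosed_sublevel_sInf_discountedCosts hA hG hf hk hα0 hα1)
  exact hV.const_mul _

end Semicontinuity

theorem map_fst_eq_map_of_mem_Wset {m : ℕ} {U₀ : Type*} [MeasurableSpace U₀]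
    {Y : Set (Fin m → ℝ)} {U : (Fin m → ℝ) → Set U₀} {f : (Fin m → ℝ) × U₀ → (Fin m → ℝ)}
    (hf : Measurable f) {γ : Measure ((Fin m → ℝ) × U₀)} (hγ : γ ∈ Wset Y U f) :
    γ.map Prod.fst = γ.map f := by
  have := hγ.1
  refine ext_of_forall_integral_eq_of_IsFiniteMeasure fun φ => ?_
  have hφf : Integrable (fun p => φ (f p)) γ := (φ.integrable _).comp_measurable hf
  have hφfst : Integrable (fun p => φ p.1) γ := (φ.integrable _).comp_measurable measurable_fst
  have hW := hγ.2.2 φ φ.continuous.continuousOn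
  rw [integral_sub hφf hφfst, sub_eq_zero] at hW
  rw [integral_map measurable_fst.aemeasurable φ.continuous.aestronglyMeasurable,
    integral_map hf.aemeasurable φ.continuous.aestronglyMeasurable, hW]

variable {m : ℕ} {U₀ : Type*} [MetricSpace U₀] [CompactSpace U₀]
  [MeasurableSpace U₀] [BorelSpace U₀]

theorem stmt_10_general
    (Y : Set (Fin m → ℝ)) (hYcomp : IsCompact Y)
    (U : (Fin m → ℝ) → Set U₀)
    (hUgraph : IsClosed {p : (Fin m → ℝ) × U₀ | p.1 ∈ Y ∧ p.2 ∈ U p.1})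
    (f : (Fin m → ℝ) × U₀ → (Fin m → ℝ)) (hf : Continuous f)
    (k : (Fin m → ℝ) × U₀ → ℝ) (hk : Continuous k)
    (hA : ∀ y ∈ Y, ∃ u ∈ U y, f (y, u) ∈ Y) :
    ∀ α ∈ Set.Ioo (0 : ℝ) 1, ∀ γ ∈ Wset Y U f,
      ∫ p, hdisc Y U f k α p.1 ∂γ ≤ ∫ p, k p ∂γ := by
  intro α hα γ hγ
  have := hγ.1
  have hG := isCompact_Gset hYcomp hUgraph hf
  obtain ⟨M, hkM⟩ := hG.exists_bound_of_continuousOn hk.continuousOn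
  have hGae : ∀ᵐ p ∂γ, p ∈ Gset Y U f := ae_iff.2 hγ.2.1
  have hh := measurable_hdisc hYcomp.isClosed.measurableSet hA hG hf hk hα.1.le hα.2
  refine integral_le_of_bellman_of_map_eq measurable_fst hf.measurable
    (map_fst_eq_map_of_mem_Wset hf.measurable hγ) hh ?_ ?_ hα.2
    (hGae.mono fun p hp => hdisc_le_bellman hA hkM hα.1 hα.2 hp)
  · exact .of_bound (hh.comp measurable_fst).aestronglyMeasurable M
      (hGae.mono fun p hp => abs_hdisc_le hkM hα.1.le hα.2 hA hp.1)
  · exact .of_bound hk.aestronglyMeasurable M (hGae.mono hkM)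

theorem stmt_10
    (Y : Set (Fin m → ℝ)) (hYne : Y.Nonempty) (hYcomp : IsCompact Y)
    (U : (Fin m → ℝ) → Set U₀)
    (hUne : ∀ y ∈ Y, (U y).Nonempty) (hUcomp : ∀ y ∈ Y, IsCompact (U y))
    (hUgraph : IsClosed {p : (Fin m → ℝ) × U₀ | p.1 ∈ Y ∧ p.2 ∈ U p.1})
    (f : (Fin m → ℝ) × U₀ → (Fin m → ℝ)) (hf : Continuous f)
    (k : (Fin m → ℝ) × U₀ → ℝ) (hk : Continuous k)
    (hA : ∀ y ∈ Y, ∃ u ∈ U y, f (y, u) ∈ Y) :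
    ∀ α ∈ Set.Ioo (0 : ℝ) 1, ∀ γ ∈ Wset Y U f,
      ∫ p, hdisc Y U f k α p.1 ∂γ ≤ ∫ p, k p ∂γ :=
  stmt_10_general Y hYcomp U hUgraph f hf k hk hA
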